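/- Let φ be a Schwartz function on ℝⁿ. For each integer i and points x, y, x₀ with |x - x₀ - θ(y - x₀)| comparable to |x - x₀| for θ ∈ [0,1], the 2-variation over t ∈ (2^i, 2^{i+1}] of {φ_t(x-y) - φ_t(x-x₀)} is at most C |y - x₀| · min{2^{i+1} |x - x₀|^{-(n+2)}, 2^{-i(n+1)}}. -/

import Mathlib

/-!
Write `v = x - x₀`, `w = y - x₀`. With `ψ = -n φ - ⟨·, ∇φ⟩` (again a Schwartz function),
`∂ₜ (t⁻ⁿ φ(z/t)) = t⁻ⁿ⁻¹ ψ(z/t)`, so the `t`-derivative of the family is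
`t⁻ⁿ⁻¹ (ψ((v - w)/t) - ψ(v/t))`. By the comparability hypothesis every point of the segment
from `v/t` to `(v - w)/t` has norm at least `|v|/(2t)`, and `∇ψ` decays like `(1 + |p|)^{-(n+2)}`;
the mean value theorem therefore bounds the derivative by `C |w| (t + |v|/2)^{-(n+2)}`.
The 2-variation is dominated by the 1-variation, hence by this bound at `t = 2^i` times the
length `2^i` of the interval, and `2^i (2^i + |v|/2)^{-(n+2)}` is at most both terms of the
minimum up to the factor `2^{n+2}`.
-/

open scoped ENNReal SchwartzMap

/-- The `ρ`-variation norm of `{a t : t ∈ I}`. -/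
noncomputable def variationNorm (ρ : ℝ) (I : Set ℝ) (a : ℝ → ℂ) : ℝ≥0∞ :=
  ⨆ (n : ℕ) (t : ℕ → ℝ) (_ : ∀ k, k ≤ n → t k ∈ I) (_ : ∀ k, k < n → t (k + 1) < t k),
    ENNReal.ofReal ((∑ k ∈ Finset.range n, ‖a (t (k + 1)) - a (t k)‖ ^ ρ) ^ (1 / ρ))

open Set

theorem Real.sum_rpow_le_rpow_sum {ι : Type*} (s : Finset ι) {f : ι → ℝ} (hf : ∀ i ∈ s, 0 ≤ f i)
    {p : ℝ} (hp : 1 ≤ p) : ∑ i ∈ s, f i ^ p ≤ (∑ i ∈ s, f i) ^ p := by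
  classical
  induction s using Finset.induction_on with
  | empty => simp [Real.zero_rpow (by linarith : p ≠ 0)]
  | insert i s hi ih =>
    rw [Finset.sum_insert hi, Finset.sum_insert hi]
    have hfs : ∀ j ∈ s, 0 ≤ f j := fun j hj => hf j (Finset.mem_insert_of_mem hj)
    calc f i ^ p + ∑ j ∈ s, f j ^ p ≤ f i ^ p + (∑ j ∈ s, f j) ^ p := by gcongr; exact ih hfs
      _ ≤ _ := Real.add_rpow_le_rpow_add (hf i (Finset.mem_insert_self i s))
          (Finset.sum_nonneg hfs) hp

theorem variationNorm_le_of_sum_le {ρ : ℝ} (hρ : 1 ≤ ρ) {I : Set ℝ} {a : ℝ → ℂ} {M : ℝ}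
    (h : ∀ (N : ℕ) (t : ℕ → ℝ), (∀ k ≤ N, t k ∈ I) → (∀ k < N, t (k + 1) < t k) →
      ∑ k ∈ Finset.range N, ‖a (t (k + 1)) - a (t k)‖ ≤ M) :
    variationNorm ρ I a ≤ ENNReal.ofReal M := by
  refine iSup_le fun N => iSup_le fun t => iSup_le fun hmem => iSup_le fun hdec => ?_
  refine ENNReal.ofReal_le_ofReal ?_
  have hnn : ∀ k ∈ Finset.range N, 0 ≤ ‖a (t (k + 1)) - a (t k)‖ := fun _ _ => norm_nonneg _
  calc (∑ k ∈ Finset.range N, ‖a (t (k + 1)) - a (t k)‖ ^ ρ) ^ (1 / ρ)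
      ≤ ((∑ k ∈ Finset.range N, ‖a (t (k + 1)) - a (t k)‖) ^ ρ) ^ (1 / ρ) := by
        gcongr
        exact Real.sum_rpow_le_rpow_sum _ hnn hρ
    _ = ∑ k ∈ Finset.range N, ‖a (t (k + 1)) - a (t k)‖ := by
        rw [← Real.rpow_mul (Finset.sum_nonneg hnn), mul_one_div_cancel (by linarith),
          Real.rpow_one]
    _ ≤ M := h N t hmem hdec

theorem variationNorm_Ioc_le_of_norm_deriv_le {ρ : ℝ} (hρ : 1 ≤ ρ) {a a' : ℝ → ℂ} {A B L : ℝ}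
    (hL : 0 ≤ L) (ha : ∀ t ∈ Icc A B, HasDerivAt a (a' t) t) (ha' : ∀ t ∈ Icc A B, ‖a' t‖ ≤ L) :
    variationNorm ρ (Ioc A B) a ≤ ENNReal.ofReal (L * (B - A)) := by
  refine variationNorm_le_of_sum_le hρ fun N t hmem hdec => ?_
  have hstep : ∀ k < N, ‖a (t (k + 1)) - a (t k)‖ ≤ L * (t k - t (k + 1)) := by
    intro k hk
    have h := (convex_Icc A B).norm_image_sub_le_of_norm_hasDerivWithin_le
      (fun s hs => (ha s hs).hasDerivWithinAt) ha' (Ioc_subset_Icc_self (hmem k hk.le))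
      (Ioc_subset_Icc_self (hmem (k + 1) hk))
    rwa [Real.norm_eq_abs, abs_sub_comm, abs_of_pos (sub_pos.2 (hdec k hk))] at h
  calc ∑ k ∈ Finset.range N, ‖a (t (k + 1)) - a (t k)‖
      ≤ ∑ k ∈ Finset.range N, L * (t k - t (k + 1)) :=
        Finset.sum_le_sum fun k hk => hstep k (Finset.mem_range.1 hk)
    _ = L * (t 0 - t N) := by rw [← Finset.mul_sum, Finset.sum_range_sub']
    _ ≤ L * (B - A) := by
        have h0 := (hmem 0 N.zero_le).2
        have hN := (hmem N le_rfl).1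
        gcongr

section Dilations

variable {E F : Type*} [NormedAddCommGroup E] [NormedSpace ℝ E] [NormedAddCommGroup F]
  [NormedSpace ℝ F]

namespace SchwartzMap

/-- The infinitesimal generator of the dilations `t⁻ⁿ φ(·/t)`. -/
noncomputable def dilationGenerator (n : ℕ) (φ : 𝓢(E, F)) : 𝓢(E, F) :=
  -(n : ℝ) • φ - bilinLeftCLM (ContinuousLinearMap.apply ℝ F).flip
    (Function.HasTemperateGrowth.id' (E := E)) (fderivCLM ℝ E F φ)

theorem dilationGenerator_apply (n : ℕ) (φ : 𝓢(E, F)) (p : E) :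
    dilationGenerator n φ p = -(n : ℝ) • φ p - fderiv ℝ φ p p := rfl

theorem hasDerivAt_dilate (n : ℕ) (φ : 𝓢(E, F)) (z : E) {t : ℝ} (ht : t ≠ 0) :
    HasDerivAt (fun s : ℝ => (s ^ n)⁻¹ • φ (s⁻¹ • z))
      ((t ^ (n + 1))⁻¹ • dilationGenerator n φ (t⁻¹ • z)) t := by
  have hpow : HasDerivAt (fun s : ℝ => (s ^ n)⁻¹) (-(n : ℝ) * (t ^ (n + 1))⁻¹) t := by
    have h := hasDerivAt_zpow (-(n : ℤ)) t (Or.inl ht)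
    simp only [zpow_neg, zpow_natCast] at h
    refine h.congr_deriv ?_
    rw [zpow_sub₀ ht, zpow_neg, zpow_natCast, zpow_one, pow_succ]
    push_cast
    ring
  have harg : HasDerivAt (fun s : ℝ => s⁻¹ • z) ((-(t ^ 2)⁻¹) • z) t :=
    (hasDerivAt_inv ht).smul_const z
  refine (hpow.smul ((φ.hasFDerivAt _).comp_hasDerivAt t harg)).congr_deriv ?_
  simp only [Function.comp_apply, dilationGenerator_apply, ContinuousLinearMap.map_smul]
  module

theorem exists_pos_fderiv_decay (φ : 𝓢(E, F)) (k : ℕ) :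
    ∃ C, 0 < C ∧ ∀ p, (1 + ‖p‖) ^ k * ‖fderiv ℝ φ p‖ ≤ C := by
  refine ⟨2 ^ k * (Finset.Iic (k, 1)).sup (fun m => SchwartzMap.seminorm ℝ m.1 m.2) φ + 1,
    by positivity, fun p => ?_⟩
  have h := one_add_le_sup_seminorm_apply (𝕜 := ℝ) (m := (k, 1)) le_rfl le_rfl φ p
  rw [norm_iteratedFDeriv_one] at h
  linarith

end SchwartzMap

theorem norm_sub_le_of_fderiv_decay {f : E → F} (hf : Differentiable ℝ f) {k : ℕ} {C r : ℝ}
    (hC : ∀ p, (1 + ‖p‖) ^ k * ‖fderiv ℝ f p‖ ≤ C) (hr : 0 ≤ r) {a b : E}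
    (hab : ∀ p ∈ segment ℝ a b, r ≤ ‖p‖) :
    ‖f b - f a‖ ≤ C / (1 + r) ^ k * ‖b - a‖ := by
  refine (convex_segment a b).norm_image_sub_le_of_norm_fderiv_le (fun p _ => hf p)
    (fun p hp => ?_) (left_mem_segment ℝ a b) (right_mem_segment ℝ a b)
  rw [le_div_iff₀ (by positivity), mul_comm]
  calc (1 + r) ^ k * ‖fderiv ℝ f p‖ ≤ (1 + ‖p‖) ^ k * ‖fderiv ℝ f p‖ := by
        gcongr
        exact hab p hp
    _ ≤ C := hC p

theorem norm_dilate_sub_le_of_fderiv_decay {f : E → F} (hf : Differentiable ℝ f) {n : ℕ}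
    {C r t : ℝ} (hC : ∀ p, (1 + ‖p‖) ^ (n + 2) * ‖fderiv ℝ f p‖ ≤ C) (ht : 0 < t) (hr : 0 ≤ r)
    {v w : E} (hvw : ∀ θ ∈ Icc (0 : ℝ) 1, r ≤ ‖v - θ • w‖) :
    ‖(t ^ (n + 1))⁻¹ • (f (t⁻¹ • (v - w)) - f (t⁻¹ • v))‖ ≤ C * ‖w‖ / (t + r) ^ (n + 2) := by
  have hseg : ∀ p ∈ segment ℝ (t⁻¹ • v) (t⁻¹ • (v - w)), r / t ≤ ‖p‖ := by
    rw [segment_eq_image']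
    rintro _ ⟨θ, hθ, rfl⟩
    have hp : t⁻¹ • v + θ • (t⁻¹ • (v - w) - t⁻¹ • v) = t⁻¹ • (v - θ • w) := by module
    dsimp only
    rw [hp, norm_smul, Real.norm_eq_abs, abs_of_pos (inv_pos.2 ht), div_eq_inv_mul]
    gcongr
    exact hvw θ hθ
  have hdiff := norm_sub_le_of_fderiv_decay hf hC (div_nonneg hr ht.le) hseg
  have hw : t⁻¹ • (v - w) - t⁻¹ • v = -(t⁻¹ • w) := by module
  rw [hw, norm_neg, norm_smul, Real.norm_eq_abs, abs_of_pos (inv_pos.2 ht)] at hdiff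
  rw [norm_smul, Real.norm_eq_abs, abs_of_pos (by positivity)]
  calc (t ^ (n + 1))⁻¹ * ‖f (t⁻¹ • (v - w)) - f (t⁻¹ • v)‖
      ≤ (t ^ (n + 1))⁻¹ * (C / (1 + r / t) ^ (n + 2) * (t⁻¹ * ‖w‖)) := by gcongr
    _ = C * ‖w‖ / (t + r) ^ (n + 2) := by
        rw [one_add_div ht.ne', div_pow]
        field_simp
        ring

theorem SchwartzMap.variationNorm_dilate_sub_le (φ : 𝓢(E, ℂ)) {n : ℕ} {q C r A B : ℝ}
    (hq : 1 ≤ q) (hC : ∀ p, (1 + ‖p‖) ^ (n + 2) * ‖fderiv ℝ (φ.dilationGenerator n) p‖ ≤ C)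
    (hA : 0 < A) (hr : 0 ≤ r) {v w : E} (hvw : ∀ θ ∈ Icc (0 : ℝ) 1, r ≤ ‖v - θ • w‖) :
    variationNorm q (Ioc A B) (fun t => (t ^ n)⁻¹ • (φ (t⁻¹ • (v - w)) - φ (t⁻¹ • v)))
      ≤ ENNReal.ofReal (C * ‖w‖ / (A + r) ^ (n + 2) * (B - A)) := by
  have hC0 : 0 ≤ C := le_trans (by positivity) (hC 0)
  refine variationNorm_Ioc_le_of_norm_deriv_le hq (by positivity)
    (a' := fun t => (t ^ (n + 1))⁻¹ •
      (φ.dilationGenerator n (t⁻¹ • (v - w)) - φ.dilationGenerator n (t⁻¹ • v)))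
    (fun t ht => ?_) fun t ht => ?_
  · have ht0 : t ≠ 0 := (hA.trans_le ht.1).ne'
    simpa only [smul_sub] using
      (φ.hasDerivAt_dilate n (v - w) ht0).fun_sub (φ.hasDerivAt_dilate n v ht0)
  · calc _ ≤ C * ‖w‖ / (t + r) ^ (n + 2) :=
          norm_dilate_sub_le_of_fderiv_decay (φ.dilationGenerator n).differentiable hC
            (hA.trans_le ht.1) hr hvw
      _ ≤ C * ‖w‖ / (A + r) ^ (n + 2) := by
          gcongr
          exact ht.1

end Dilations

theorem two_zpow_div_le_min (n : ℕ) (i : ℤ) {b : ℝ} (hb : 0 < b) :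
    2 ^ i / (2 ^ i + b / 2) ^ (n + 2)
      ≤ 2 ^ (n + 2) * min (2 ^ (i + 1) * b ^ (-((n : ℝ) + 2))) (2 ^ (-(i : ℝ) * ((n : ℝ) + 1))) := by
  have ha : (0 : ℝ) < 2 ^ i := by positivity
  have hb_rpow : b ^ (-((n : ℝ) + 2)) = (b ^ (n + 2))⁻¹ := by
    rw [Real.rpow_neg hb.le]
    norm_cast
  have ha_rpow : (2 : ℝ) ^ (-(i : ℝ) * ((n : ℝ) + 1)) = ((2 ^ i) ^ (n + 1))⁻¹ := by
    rw [neg_mul, Real.rpow_neg zero_le_two, ← zpow_natCast, ← zpow_mul]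
    norm_cast
  rw [hb_rpow, ha_rpow, mul_min_of_nonneg _ _ (by positivity), zpow_add_one₀ two_ne_zero]
  refine le_min ?_ ?_
  · calc 2 ^ i / (2 ^ i + b / 2) ^ (n + 2) ≤ 2 ^ i / (b / 2) ^ (n + 2) := by
          gcongr
          linarith
      _ ≤ 2 ^ (n + 2) * (2 ^ i * 2 * (b ^ (n + 2))⁻¹) := by
          rw [div_pow]
          field_simp
          linarith
  · calc 2 ^ i / (2 ^ i + b / 2) ^ (n + 2) ≤ 2 ^ i / (2 ^ i) ^ (n + 2) := by
          gcongr
          linarith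
      _ = ((2 ^ i) ^ (n + 1))⁻¹ := by
          rw [pow_succ _ (n + 1)]
          field_simp
      _ ≤ 2 ^ (n + 2) * ((2 ^ i) ^ (n + 1))⁻¹ :=
          le_mul_of_one_le_left (by positivity) (one_le_pow₀ one_le_two)

/-- For a Schwartz function `φ` on `ℝⁿ`, integers `i` and points with
`|x - x₀ - θ(y - x₀)| ∼ |x - x₀|` for `θ ∈ [0,1]`, the 2-variation over `t ∈ (2^i, 2^{i+1}]`
of `{φ_t(x-y) - φ_t(x-x₀)}` is at most
`C |y - x₀| · min(2^{i+1} |x - x₀|^{-(n+2)}, 2^{-i(n+1)})`. -/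
theorem variation_two_dyadic_kernel_bound (n : ℕ)
    (φ : 𝓢(EuclideanSpace ℝ (Fin n), ℂ)) :
    ∃ C : ℝ, 0 < C ∧ ∀ (i : ℤ) (x y x₀ : EuclideanSpace ℝ (Fin n)),
      (∀ θ ∈ Set.Icc (0 : ℝ) 1,
        ‖x - x₀‖ / 2 ≤ ‖x - x₀ - θ • (y - x₀)‖ ∧ ‖x - x₀ - θ • (y - x₀)‖ ≤ 2 * ‖x - x₀‖) →
      variationNorm 2 (Set.Ioc ((2 : ℝ) ^ i) ((2 : ℝ) ^ (i + 1)))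
          (fun t => ((t ^ n : ℝ))⁻¹ • (φ (t⁻¹ • (x - y)) - φ (t⁻¹ • (x - x₀))))
        ≤ ENNReal.ofReal (C * ‖y - x₀‖ *
            min ((2 : ℝ) ^ (i + 1) * ‖x - x₀‖ ^ (-((n : ℝ) + 2)))
              ((2 : ℝ) ^ (-((i : ℝ)) * ((n : ℝ) + 1)))) := by
  obtain ⟨C, hC0, hC⟩ := (φ.dilationGenerator n).exists_pos_fderiv_decay (n + 2)
  refine ⟨C * 2 ^ (n + 2), by positivity, fun i x y x₀ hxy => ?_⟩
  rw [← sub_sub_sub_cancel_right x y x₀]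
  refine (φ.variationNorm_dilate_sub_le one_le_two hC (zpow_pos two_pos i) (by positivity)
    fun θ hθ => (hxy θ hθ).1).trans (ENNReal.ofReal_le_ofReal ?_)
  have hlen : (2 : ℝ) ^ (i + 1) - 2 ^ i = 2 ^ i := by rw [zpow_add_one₀ two_ne_zero]; ring
  rw [hlen]
  rcases eq_or_ne (x - x₀) 0 with hx | hx
  · -- `‖x - x₀‖ ^ (-(n + 2)) = 0` here, but the upper comparability at `θ = 1` forces `y = x₀`.
    have hy : x₀ - y = 0 := by simpa [hx] using (hxy 1 ⟨zero_le_one, le_rfl⟩).2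
    simp [norm_sub_rev y, hy]
  · calc C * ‖y - x₀‖ / (2 ^ i + ‖x - x₀‖ / 2) ^ (n + 2) * 2 ^ i
        = C * ‖y - x₀‖ * (2 ^ i / (2 ^ i + ‖x - x₀‖ / 2) ^ (n + 2)) := by ring
      _ ≤ _ := (mul_le_mul_of_nonneg_left (two_zpow_div_le_min n i (norm_pos_iff.2 hx))
          (by positivity)).trans_eq (by ring)
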